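/- arXiv:1708.03558 — 6 statements merged into one kernel-verified Lean document; each statement's English description precedes it below -/
import Mathlib

section
/- For any string s, the size of the LZ parsing of s is less than or equal to the size of any LZ-type parsing of s. -/
attribute [local instance] Classical.propDecidable

/-- `PermOv s i ℓ` : the substring of `s` of length `ℓ` starting at 0-indexed position `i`
has an occurrence starting at some earlier position `j < i` (possibly overlapping it). -/
def PermOv {α : Type*} (s : List α) (i ℓ : ℕ) : Prop :=
  ∃ j < i, (s.drop j).take ℓ = (s.drop i).take ℓ

/-- `PermNov s i ℓ` : the substring of `s` of length `ℓ` starting at 0-indexed position `i`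
has an occurrence starting at some position `j` with `j + ℓ ≤ i` (not overlapping it). -/
def PermNov {α : Type*} (s : List α) (i ℓ : ℕ) : Prop :=
  ∃ j, j + ℓ ≤ i ∧ (s.drop j).take ℓ = (s.drop i).take ℓ

/-- `PermOv3 s i ℓ` : the substring of `s` of length `ℓ - 1` starting at 0-indexed position `i`
(i.e. the phrase of length `ℓ` starting at `i` minus its last letter) has an occurrence
starting at some earlier position `j < i` (possibly overlapping). -/
def PermOv3 {α : Type*} (s : List α) (i ℓ : ℕ) : Prop :=
  ∃ j < i, (s.drop j).take (ℓ - 1) = (s.drop i).take (ℓ - 1)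

/-- `PermNov3 s i ℓ` : the substring of `s` of length `ℓ - 1` starting at 0-indexed position `i`
has an occurrence starting at some position `j` with `j + (ℓ - 1) ≤ i` (so this occurrence
ends before position `i`). -/
def PermNov3 {α : Type*} (s : List α) (i ℓ : ℕ) : Prop :=
  ∃ j, j + (ℓ - 1) ≤ i ∧ (s.drop j).take (ℓ - 1) = (s.drop i).take (ℓ - 1)

/-- Length of the greedy phrase starting at 0-indexed position `i`: the largest
`ℓ ≤ |s| - i` permitted by `P`, or `1` (a single letter) if no length is permitted. -/
noncomputable def phraseLen {α : Type*} (P : List α → ℕ → ℕ → Prop) (s : List α) (i : ℕ) : ℕ :=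
  max 1 (Nat.findGreatest (fun ℓ => P s i ℓ) (s.length - i))

/-- The list of phrases of the greedy parsing (w.r.t. the permission predicate `P`)
of the suffix of `s` starting at 0-indexed position `i`. -/
noncomputable def phrasesFrom {α : Type*} (P : List α → ℕ → ℕ → Prop) (s : List α) (i : ℕ) :
    List (List α) :=
  if _h : i < s.length then
    (s.drop i).take (phraseLen P s i) :: phrasesFrom P s (i + phraseLen P s i)
  else []
  termination_by s.length - i
  decreasing_by
    have h1 : 1 ≤ phraseLen P s i := by unfold phraseLen; exact Nat.le_max_left _ _
    omega

/-- The LZ parsing of `s` (phrases may overlap their earlier occurrences). -/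
noncomputable def lzPhrases {α : Type*} (s : List α) : List (List α) := phrasesFrom PermOv s 0
/-- The novLZ parsing of `s` (earlier occurrences may not overlap the phrases). -/
noncomputable def novlzPhrases {α : Type*} (s : List α) : List (List α) := phrasesFrom PermNov s 0
/-- The LZ3 parsing of `s`. -/
noncomputable def lz3Phrases {α : Type*} (s : List α) : List (List α) := phrasesFrom PermOv3 s 0
/-- The novLZ3 parsing of `s`. -/
noncomputable def novlz3Phrases {α : Type*} (s : List α) : List (List α) := phrasesFrom PermNov3 s 0

/-- `Zov`: the size (number of phrases) of the LZ parsing of `s`. -/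
noncomputable def zOv {α : Type*} (s : List α) : ℕ := (lzPhrases s).length
/-- `Znon`: the size of the novLZ parsing of `s`. -/
noncomputable def zNov {α : Type*} (s : List α) : ℕ := (novlzPhrases s).length
/-- `Zov₃`: the size of the LZ3 parsing of `s`. -/
noncomputable def zOv3 {α : Type*} (s : List α) : ℕ := (lz3Phrases s).length
/-- `Znon₃`: the size of the novLZ3 parsing of `s`. -/
noncomputable def zNov3 {α : Type*} (s : List α) : ℕ := (novlz3Phrases s).length

/-- `ts` is an LZ-type parsing of `s`: a decomposition of `s` into nonempty strings such that
each `tᵢ` is a single letter or occurs in `s[1..|t₁⋯tᵢ|-1]`. -/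
def IsLZTypeParsing {α : Type*} (s : List α) (ts : List (List α)) : Prop :=
  ts.flatten = s ∧ (∀ t ∈ ts, t ≠ []) ∧
    ∀ i (h : i < ts.length),
      ts[i].length = 1 ∨ ts[i] <:+: s.take ((ts.take (i + 1)).flatten.length - 1)

/-- `ts` is a novLZ-type parsing of `s`: a decomposition of `s` into nonempty strings such that
each `tᵢ` is a single letter or occurs in `t₁⋯tᵢ₋₁`. -/
def IsNovLZTypeParsing {α : Type*} (s : List α) (ts : List (List α)) : Prop :=
  ts.flatten = s ∧ (∀ t ∈ ts, t ≠ []) ∧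
    ∀ i (h : i < ts.length),
      ts[i].length = 1 ∨ ts[i] <:+: (ts.take i).flatten

/-- `ts` is an LZ3-type parsing of `s`: a decomposition of `s` into nonempty strings such that
each `tᵢ` minus its last letter occurs in `s[1..|t₁⋯tᵢ|-2]`. -/
def IsLZ3TypeParsing {α : Type*} (s : List α) (ts : List (List α)) : Prop :=
  ts.flatten = s ∧ (∀ t ∈ ts, t ≠ []) ∧
    ∀ i (h : i < ts.length),
      ts[i].dropLast <:+: s.take ((ts.take (i + 1)).flatten.length - 2)

/-- `ts` is a novLZ3-type parsing of `s`: a decomposition of `s` into nonempty strings such that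
each `tᵢ` minus its last letter occurs in `t₁⋯tᵢ₋₁`. -/
def IsNovLZ3TypeParsing {α : Type*} (s : List α) (ts : List (List α)) : Prop :=
  ts.flatten = s ∧ (∀ t ∈ ts, t ≠ []) ∧
    ∀ i (h : i < ts.length),
      ts[i].dropLast <:+: (ts.take i).flatten


section LZAux
variable {α : Type*}

lemma phrasesFrom_of_lt (P : List α → ℕ → ℕ → Prop) (s : List α) (i : ℕ) (h : i < s.length) :
    phrasesFrom P s i =
      (s.drop i).take (phraseLen P s i) :: phrasesFrom P s (i + phraseLen P s i) := by
  rw [phrasesFrom]; simp [h]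

lemma phrasesFrom_of_ge (P : List α → ℕ → ℕ → Prop) (s : List α) (i : ℕ) (h : ¬ i < s.length) :
    phrasesFrom P s i = [] := by
  rw [phrasesFrom]; simp [h]

lemma one_le_phraseLen (P : List α → ℕ → ℕ → Prop) (s : List α) (i : ℕ) :
    1 ≤ phraseLen P s i := Nat.le_max_left _ _

lemma phraseLen_le (P : List α → ℕ → ℕ → Prop) (s : List α) (i : ℕ) (h : i < s.length) :
    phraseLen P s i ≤ s.length - i := by
  unfold phraseLen
  exact max_le (by omega) (Nat.findGreatest_le _)

lemma le_phraseLen (P : List α → ℕ → ℕ → Prop) (s : List α) (i ℓ : ℕ)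
    (h1 : ℓ ≤ s.length - i) (h2 : P s i ℓ) : ℓ ≤ phraseLen P s i := by
  unfold phraseLen
  exact le_trans (Nat.le_findGreatest h1 h2) (Nat.le_max_right _ _)

lemma permOv_of_phraseLen (s : List α) (i : ℕ) (h : 2 ≤ phraseLen PermOv s i) :
    PermOv s i (phraseLen PermOv s i) := by
  unfold phraseLen at *
  have heq : max 1 (Nat.findGreatest (fun ℓ => PermOv s i ℓ) (s.length - i)) =
      Nat.findGreatest (fun ℓ => PermOv s i ℓ) (s.length - i) := by omega
  rw [heq]
  exact Nat.findGreatest_of_ne_zero rfl (by omega)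

lemma permOv_shift (s : List α) (i ℓ k : ℕ) (h : PermOv s i ℓ) :
    PermOv s (i + k) (ℓ - k) := by
  obtain ⟨j, hj, he⟩ := h
  refine ⟨j + k, by omega, ?_⟩
  have hd : ∀ m : ℕ, (s.drop (m + k)).take (ℓ - k) = ((s.drop m).take ℓ).drop k := by
    intro m
    rw [List.drop_take, List.drop_drop]
  rw [hd j, hd i, he]

/-- Monotonicity: the greedy LZ phrase count is antitone in the start position. -/
lemma g_mono (s : List α) : ∀ n i i', s.length - i ≤ n → i ≤ i' →
    (phrasesFrom PermOv s i').length ≤ (phrasesFrom PermOv s i).length := by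
  intro n
  induction n with
  | zero =>
    intro i i' hn hle
    rw [phrasesFrom_of_ge _ _ _ (by omega), phrasesFrom_of_ge _ _ _ (by omega)]
  | succ n ih =>
    intro i i' hn hle
    by_cases hi : i < s.length
    · rcases eq_or_lt_of_le hle with rfl | hlt
      · exact le_rfl
      · have hL1 : 1 ≤ phraseLen PermOv s i := one_le_phraseLen PermOv s i
        have hLle : phraseLen PermOv s i ≤ s.length - i := phraseLen_le _ _ _ hi
        rw [phrasesFrom_of_lt _ _ _ hi]
        simp only [List.length_cons]
        by_cases hcase : i + phraseLen PermOv s i ≤ i'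
        · have := ih (i + phraseLen PermOv s i) i' (by omega) hcase
          omega
        · push_neg at hcase
          have hi' : i' < s.length := by omega
          have hL2 : 2 ≤ phraseLen PermOv s i := by omega
          have hperm : PermOv s i (phraseLen PermOv s i) := permOv_of_phraseLen s i hL2
          have hshift : PermOv s i' (phraseLen PermOv s i - (i' - i)) := by
            have := permOv_shift s i (phraseLen PermOv s i) (i' - i) hperm
            rwa [show i + (i' - i) = i' by omega] at this
          have hle' : phraseLen PermOv s i - (i' - i) ≤ phraseLen PermOv s i' :=
            le_phraseLen _ _ _ _ (by omega) hshift
          rw [phrasesFrom_of_lt _ _ _ hi']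
          simp only [List.length_cons]
          have := ih (i + phraseLen PermOv s i) (i' + phraseLen PermOv s i')
            (by omega) (by omega)
          omega
    · rw [phrasesFrom_of_ge _ _ _ hi, phrasesFrom_of_ge _ _ _ (by omega)]

lemma g_mono' (s : List α) (i i' : ℕ) (h : i ≤ i') :
    (phrasesFrom PermOv s i').length ≤ (phrasesFrom PermOv s i).length :=
  g_mono s (s.length - i) i i' le_rfl h

end LZAux

/-- The LZ parsing of any string `s` has the least size among all LZ-type parsings of `s`. -/
theorem lz_optimal {α : Type*} (s : List α) (ts : List (List α))
    (h : IsLZTypeParsing s ts) : zOv s ≤ ts.length := by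
  obtain ⟨hflat, hne, hocc⟩ := h
  set pos : ℕ → ℕ := fun i => ((ts.take i).flatten).length with hpos
  have hposdef : ∀ j, ((ts.take j).flatten).length = pos j := fun _ => rfl
  have hpos_succ : ∀ i (hi : i < ts.length), pos (i + 1) = pos i + ts[i].length := by
    intro i hi
    simp only [hpos, List.take_succ, List.getElem?_eq_getElem hi,
      Option.toList_some, List.flatten_append, List.length_append, List.flatten_cons,
      List.flatten_nil, List.append_nil]
  have hpos_last : pos ts.length = s.length := by
    rw [← hposdef, List.take_length, hflat]
  have hpos_le : ∀ i, pos i ≤ s.length := by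
    intro i
    have hs : s = (ts.take i).flatten ++ (ts.drop i).flatten := by
      rw [← List.flatten_append, List.take_append_drop, hflat]
    rw [hs, List.length_append, hposdef]
    omega
  have hdecomp : ∀ i (hi : i < ts.length),
      s = (ts.take i).flatten ++ ts[i] ++ (ts.drop (i + 1)).flatten := by
    intro i hi
    conv_lhs => rw [← hflat, ← List.take_append_drop (i + 1) ts]
    rw [List.flatten_append, List.take_succ, List.getElem?_eq_getElem hi,
      List.flatten_append]
    simp [List.append_assoc]
  have hstep : ∀ i (hi : i < ts.length),
      (phrasesFrom PermOv s (pos i)).length ≤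
        1 + (phrasesFrom PermOv s (pos (i + 1))).length := by
    intro i hi
    have htne : ts[i] ≠ [] := hne _ (List.getElem_mem hi)
    have htpos : 0 < ts[i].length := List.length_pos_iff.mpr htne
    have hsucc := hpos_succ i hi
    have hle1 : pos (i + 1) ≤ s.length := hpos_le (i + 1)
    have hpi : pos i < s.length := by omega
    have hts : (s.drop (pos i)).take ts[i].length = ts[i] := by
      have hd := hdecomp i hi
      conv_lhs => rw [hd]
      rw [List.append_assoc, show pos i = ((ts.take i).flatten).length from rfl,
        List.drop_left, List.take_left]
    have hkey : pos (i + 1) ≤ pos i + phraseLen PermOv s (pos i) := by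
      rcases hocc i hi with h1 | hinf
      · have := one_le_phraseLen PermOv s (pos i)
        omega
      · obtain ⟨u, v, huv⟩ := hinf
        rw [hposdef] at huv
        have hlen : u.length + ts[i].length + v.length = pos (i + 1) - 1 := by
          have hl := congrArg List.length huv
          simp only [List.length_append, List.length_take] at hl
          omega
        have hperm : PermOv s (pos i) ts[i].length := by
          refine ⟨u.length, by omega, ?_⟩
          rw [hts]
          have h1 : (s.take (pos (i + 1) - 1)).drop u.length = ts[i] ++ v := by
            rw [← huv, List.append_assoc, List.drop_left]
          rw [List.drop_take] at h1
          have h2 := congrArg (List.take ts[i].length) h1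
          rw [List.take_take, Nat.min_eq_left (by omega), List.take_left] at h2
          exact h2
        have := le_phraseLen PermOv s (pos i) ts[i].length (by omega) hperm
        omega
    rw [phrasesFrom_of_lt _ _ _ hpi]
    simp only [List.length_cons]
    have := g_mono' s (pos (i + 1)) (pos i + phraseLen PermOv s (pos i)) hkey
    omega
  have main : ∀ k, k ≤ ts.length →
      (phrasesFrom PermOv s (pos (ts.length - k))).length ≤ k := by
    intro k
    induction k with
    | zero =>
      intro _
      simp only [Nat.sub_zero, hpos_last]
      rw [phrasesFrom_of_ge _ _ _ (by omega)]
      simp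
    | succ k ih =>
      intro hk
      have hi : ts.length - (k + 1) < ts.length := by omega
      have h1 := hstep _ hi
      have h2 := ih (by omega)
      rw [show ts.length - (k + 1) + 1 = ts.length - k by omega] at h1
      omega
  have hmain := main ts.length le_rfl
  simp only [Nat.sub_self] at hmain
  have hpos0 : pos 0 = 0 := by simp [hpos]
  rw [hpos0] at hmain
  exact hmain
end

section
/- For any string s, the size of the novLZ parsing of s is less than or equal to the size of any novLZ-type parsing of s. -/
attribute [local instance] Classical.propDecidable

lemma permNov_mono {α : Type*} {s : List α} {p g ℓ : ℕ} (hpg : p ≤ g)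
    (h : PermNov s p ℓ) : PermNov s g (p + ℓ - g) := by
  obtain ⟨j, hj, heq⟩ := h
  refine ⟨j + (g - p), by omega, ?_⟩
  have h2 := congrArg (List.drop (g - p)) heq
  rw [List.drop_take, List.drop_take, List.drop_drop, List.drop_drop] at h2
  have e1 : ℓ - (g - p) = p + ℓ - g := by omega
  have e2 : p + (g - p) = g := by omega
  rw [e1, e2] at h2
  exact h2

lemma permNov_of_infix {α : Type*} {s t : List α} {pos : ℕ}
    (ht : (s.drop pos).take t.length = t) (hinf : t <:+: s.take pos) :
    PermNov s pos t.length := by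
  obtain ⟨l, r, hlr⟩ := hinf
  have hlen := congrArg List.length hlr
  simp [List.length_take] at hlen
  have hle : l.length + t.length ≤ pos := by omega
  refine ⟨l.length, hle, ?_⟩
  rw [ht]
  have h1 : (s.take pos).drop l.length = t ++ r := by
    rw [← hlr, List.append_assoc, List.drop_left]
  rw [List.drop_take] at h1
  have h2 := congrArg (List.take t.length) h1
  rw [List.take_take, List.take_left, Nat.min_eq_left (by omega)] at h2
  exact h2

lemma novlz_main {α : Type*} (s : List α) : ∀ (us : List (List α)) (p g : ℕ), p ≤ g →
    us.flatten.length = s.length - p →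
    (∀ i (h : i < us.length),
      us[i].length = 1 ∨ PermNov s (p + (us.take i).flatten.length) us[i].length) →
    (phrasesFrom PermNov s g).length ≤ us.length := by
  intro us
  induction us with
  | nil =>
    intro p g hpg hlen _
    have hns : ¬ g < s.length := by simp at hlen; omega
    rw [phrasesFrom, dif_neg hns]
  | cons t us' ih =>
    intro p g hpg hlen hocc
    by_cases hg : g < s.length
    · have hlen' : t.length + us'.flatten.length = s.length - p := by simpa using hlen
      have hps : p < s.length := lt_of_le_of_lt hpg hg
      have hlen2 : us'.flatten.length = s.length - (p + t.length) := by omega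
      have hocc2 : ∀ i (h : i < us'.length),
          us'[i].length = 1 ∨
            PermNov s ((p + t.length) + (us'.take i).flatten.length) us'[i].length := by
        intro i hi
        have h3 := hocc (i + 1) (by simp; omega)
        simpa [Nat.add_assoc] using h3
      by_cases hcase : p + t.length ≤ g
      · have := ih (p + t.length) g hcase hlen2 hocc2
        exact le_trans this (by simp)
      · push_neg at hcase
        have hperm0 := hocc 0 (by simp)
        simp only [List.take_zero, List.flatten_nil, List.length_nil, Nat.add_zero,
          List.getElem_cons_zero] at hperm0
        have hts : p + t.length ≤ s.length := by omega
        have hL : p + t.length - g ≤ phraseLen PermNov s g := by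
          rcases hperm0 with h1 | h1
          · have : p + t.length - g ≤ 1 := by omega
            exact le_trans this (Nat.le_max_left _ _)
          · have h2 : PermNov s g (p + t.length - g) := permNov_mono hpg h1
            have h4 : p + t.length - g ≤ Nat.findGreatest (fun ℓ => PermNov s g ℓ)
                (s.length - g) := Nat.le_findGreatest (by omega) h2
            exact le_trans h4 (Nat.le_max_right _ _)
        rw [phrasesFrom, dif_pos hg]
        simp only [List.length_cons, Nat.succ_le_succ_iff]
        exact ih (p + t.length) (g + phraseLen PermNov s g) (by omega) hlen2 hocc2
    · rw [phrasesFrom, dif_neg hg]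
      simp

/-- The novLZ parsing of any string `s` has the least size among all novLZ-type parsings
of `s`. -/
theorem novlz_optimal {α : Type*} (s : List α) (ts : List (List α))
    (h : IsNovLZTypeParsing s ts) : zNov s ≤ ts.length := by
  obtain ⟨hflat, hne, hocc⟩ := h
  have hpref : ∀ i : ℕ, (ts.take i).flatten ++ (ts.drop i).flatten = s := by
    intro i
    rw [← List.flatten_append, List.take_append_drop, hflat]
  have key : ∀ i (hi : i < ts.length),
      ts[i].length = 1 ∨ PermNov s (0 + (ts.take i).flatten.length) ts[i].length := by
    intro i hi
    rcases hocc i hi with h1 | h1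
    · exact Or.inl h1
    · right
      rw [Nat.zero_add]
      have htake : s.take ((ts.take i).flatten.length) = (ts.take i).flatten := by
        conv_lhs => rw [← hpref i]
        rw [List.take_left]
      have hdrop : s.drop ((ts.take i).flatten.length) = ts[i] ++ (ts.drop (i + 1)).flatten := by
        conv_lhs => rw [← hpref i]
        rw [List.drop_left, List.drop_eq_getElem_cons hi, List.flatten_cons]
      refine permNov_of_infix ?_ ?_
      · rw [hdrop, List.take_left]
      · rw [htake]; exact h1
  have hlen : ts.flatten.length = s.length - 0 := by rw [hflat]; simp
  exact novlz_main s ts 0 0 le_rfl hlen key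
end

section
/- For any string s, the size Zov3 of the LZ3 parsing of s is less than or equal to the size Znon3 of the novLZ3 parsing of s. -/
attribute [local instance] Classical.propDecidable

private lemma stepA {α : Type*} (s : List α) {j i : ℕ} (hji : j ≤ i) :
    j + phraseLen PermNov3 s j ≤ i + phraseLen PermOv3 s i := by
  have hov1 : 1 ≤ phraseLen PermOv3 s i := Nat.le_max_left _ _
  set ℓn := Nat.findGreatest (fun ℓ => PermNov3 s j ℓ) (s.length - j) with hℓndef
  have hnov : phraseLen PermNov3 s j = max 1 ℓn := rfl
  rcases Nat.eq_zero_or_pos ℓn with h0 | hpos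
  · rw [hnov, h0]; omega
  have hP : PermNov3 s j ℓn := by
    have h0 : PermNov3 s j 0 := ⟨0, by simp, by simp⟩
    exact Nat.findGreatest_spec (Nat.zero_le _) h0
  have hle : ℓn ≤ s.length - j := Nat.findGreatest_le _
  by_cases hcase : j + ℓn ≤ i + 1
  · rw [hnov]; omega
  · push_neg at hcase
    -- ℓ' := j + ℓn - i ≥ 2
    set ℓ' := j + ℓn - i with hℓ'def
    have hℓ'2 : 2 ≤ ℓ' := by omega
    obtain ⟨j0, hj0, heq⟩ := hP
    have hd : ℓn - 1 ≥ (i - j) + 1 := by omega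
    have hPov : PermOv3 s i ℓ' := by
      refine ⟨j0 + (i - j), by omega, ?_⟩
      have := congrArg (List.drop (i - j)) heq
      rw [List.drop_take, List.drop_take, List.drop_drop, List.drop_drop] at this
      have h2 : j + (i - j) = i := by omega
      rw [h2] at this
      have h3 : ℓ' - 1 = ℓn - 1 - (i - j) := by omega
      rw [h3]
      exact this
    have hjlen : j < s.length := by omega
    have hℓ'le : ℓ' ≤ s.length - i := by omega
    have : ℓ' ≤ Nat.findGreatest (fun ℓ => PermOv3 s i ℓ) (s.length - i) :=
      Nat.le_findGreatest hℓ'le hPov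
    have : ℓ' ≤ phraseLen PermOv3 s i := le_trans this (Nat.le_max_right _ _)
    rw [hnov]; omega

private lemma mainLen {α : Type*} (s : List α) :
    ∀ n j i, s.length ≤ j + n → j ≤ i →
      (phrasesFrom PermOv3 s i).length ≤ (phrasesFrom PermNov3 s j).length := by
  intro n
  induction n with
  | zero =>
    intro j i h hji
    conv_lhs => rw [phrasesFrom]
    rw [dif_neg (show ¬ i < s.length by omega)]
    exact Nat.zero_le _
  | succ n ih =>
    intro j i h hji
    by_cases hi : i < s.length
    · have hj : j < s.length := lt_of_le_of_lt hji hi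
      conv_lhs => rw [phrasesFrom]
      conv_rhs => rw [phrasesFrom]
      rw [dif_pos hi, dif_pos hj]
      simp only [List.length_cons, Nat.succ_le_succ_iff]
      have h1 : 1 ≤ phraseLen PermNov3 s j := Nat.le_max_left _ _
      exact ih _ _ (by omega) (stepA s hji)
    · conv_lhs => rw [phrasesFrom]
      rw [dif_neg hi]
      exact Nat.zero_le _

/-- For any string `s`, the size `Zov₃` of the LZ3 parsing of `s` is at most the size `Znon₃`
of the novLZ3 parsing of `s`. -/
theorem zOv3_le_zNov3 {α : Type*} (s : List α) : zOv3 s ≤ zNov3 s := by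
  exact mainLen s s.length 0 0 (by omega) le_rfl
end

section
/- For every integer k ≥ 1 there exists a string over a binary alphabet whose LZ3 parsing has size k and whose LZ parsing has size 2k − 1 (i.e., Zov3 = k and Zov = 2k − 1). In particular, for k ≥ 2 the string a a b a a b³ a a b⁷ ⋯ a a b^{2^{k−2}−1} a a b^{2^{k−2}} has LZ parsing a.a.b.aab.b².aab³.b⁴.⋯.aab^{2^{k−2}−1}.b of size 2k−1 and LZ3 parsing a.ab.aabb.baab⁴.b³aab⁸.⋯.b^{2^{k−3}−1}aab^{2^{k−2}} of size k. -/
attribute [local instance] Classical.propDecidable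

section Example15
/-- The letter `a`. -/
def la : Fin 2 := 0
/-- The letter `b`. -/
def lb : Fin 2 := 1

/-- The string `aab·aab³·aab⁷ ⋯ aab^(2^(k-2)-1)·aab^(2^(k-2))` (for `k = 2` it is just
`aab^(2^(k-2)) = aab`). -/
def exStr (k : ℕ) : List (Fin 2) :=
  ((List.range (k - 2)).flatMap fun t => [la, la] ++ List.replicate (2 ^ (t + 1) - 1) lb)
    ++ ([la, la] ++ List.replicate (2 ^ (k - 2)) lb)

/-- The parsing `a.a.b.aab.b².aab³.b⁴.⋯.aab^(2^(k-2)-1).b` (for `k = 2` it is `a.a.b`). -/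
def exLZParse (k : ℕ) : List (List (Fin 2)) :=
  [[la], [la], [lb]] ++ (List.range (k - 2)).flatMap fun t =>
    [[la, la] ++ List.replicate (2 ^ (t + 1) - 1) lb,
     if t = k - 3 then [lb] else List.replicate (2 ^ (t + 1)) lb]

/-- The parsing `a.ab.aabb.baab⁴.b³aab⁸.⋯.b^(2^(k-3)-1)aab^(2^(k-2))` (for `k = 2` it is
`a.ab`). -/
def exLZ3Parse (k : ℕ) : List (List (Fin 2)) :=
  [[la], [la, lb]] ++ (List.range (k - 2)).map fun t =>
    List.replicate (2 ^ t - 1) lb ++ [la, la] ++ List.replicate (2 ^ (t + 1)) lb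

/-!
Every `exStr k` is a prefix of the infinite word whose `m`-th block is `aab^(2^(m+1)-1)`. Its
factors `aa` are exactly the block starts and its `b`-runs double from one block to the next, so
neither `aab^(2^(t+1))` nor `b^(2^(t+1))a` occurs before block `t+1`. Hence the LZ phrase starting
at block `t+1` is a copy of block `t`, and the remaining `2^(t+1)` letters `b` of the block form a
second phrase: two phrases per block. An LZ3 phrase may end with a letter that breaks the copy;
the one starting at offset `2^t + 2` of block `t` copies the rest of that run, the next `aa` and
`2^(t+1) - 1` letters `b` from one block earlier, adds one more `b`, and so ends at offset
`2^(t+1) + 2` of block `t+1`: one phrase per block.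
-/

section GreedyParsing

variable {α : Type*}

theorem permOv_antitone (s : List α) (i : ℕ) : Antitone (PermOv s i) :=
  fun ℓ m hℓm ⟨j, hj, he⟩ => ⟨j, hj, by
    simpa [List.take_take, min_eq_left hℓm] using congrArg (List.take ℓ) he⟩

theorem permOv3_antitone (s : List α) (i : ℕ) : Antitone (PermOv3 s i) :=
  fun _ _ hℓm => permOv_antitone s i (Nat.sub_le_sub_right hℓm 1)

theorem not_permOv_zero (s : List α) (ℓ : ℕ) : ¬ PermOv s 0 ℓ :=
  fun ⟨_, hj, _⟩ => Nat.not_lt_zero _ hj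

variable {P : List α → ℕ → ℕ → Prop} {s : List α} {i ℓ : ℕ}

theorem phraseLen_eq_of_antitone (hP : Antitone (P s i)) (hℓ : 1 ≤ ℓ) (hle : ℓ ≤ s.length - i)
    (hyes : P s i ℓ) (hno : ℓ < s.length - i → ¬ P s i (ℓ + 1)) : phraseLen P s i = ℓ := by
  have : Nat.findGreatest (P s i) (s.length - i) = ℓ :=
    Nat.findGreatest_eq_iff.mpr
      ⟨hle, fun _ => hyes, fun m hm hmle hPm => hno (by omega) (hP hm hPm)⟩
  rw [phraseLen, this, max_eq_right hℓ]

theorem phraseLen_eq_one_of_not (hP : Antitone (P s i)) (hno : ¬ P s i 1) :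
    phraseLen P s i = 1 := by
  have : Nat.findGreatest (P s i) (s.length - i) = 0 :=
    Nat.findGreatest_eq_zero_iff.mpr fun _ hm _ hPm => hno (hP hm hPm)
  rw [phraseLen, this, max_eq_left zero_le_one]

theorem phraseLen_eq_one_of_length_le (h : s.length ≤ i + 1) : phraseLen P s i = 1 := by
  rw [phraseLen, max_eq_left ((Nat.findGreatest_le _).trans (by omega))]

theorem phrasesFrom_of_length_le (h : s.length ≤ i) : phrasesFrom P s i = [] := by
  rw [phrasesFrom, dif_neg (by omega)]

theorem phrasesFrom_of_lt_length (h : i < s.length) :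
    phrasesFrom P s i =
      (s.drop i).take (phraseLen P s i) :: phrasesFrom P s (i + phraseLen P s i) := by
  rw [phrasesFrom, dif_pos h]

theorem phrasesFrom_singleton (x : α) : phrasesFrom P [x] 0 = [[x]] := by
  rw [phrasesFrom_of_lt_length (by simp), phraseLen_eq_one_of_length_le (by simp),
    phrasesFrom_of_length_le (by simp)]
  rfl

end GreedyParsing

section WordPrefix

variable {α : Type*} (w : ℕ → α) {n i j ℓ : ℕ}

theorem range_add_eq_append_range' (a b : ℕ) :
    List.range (a + b) = List.range a ++ List.range' a b := by
  simp only [List.range_eq_range', ← List.range'_append_1, Nat.zero_add]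

theorem take_drop_map_range (h : i + ℓ ≤ n) :
    (((List.range n).map w).drop i).take ℓ = (List.range' i ℓ).map w := by
  rw [← List.map_drop, ← List.map_take, List.range_eq_range', List.drop_range',
    List.take_range'_of_length_ge (by omega)]
  simp

theorem map_range'_eq_map_range'_iff :
    (List.range' j ℓ).map w = (List.range' i ℓ).map w ↔ ∀ d < ℓ, w (j + d) = w (i + d) := by
  simp [List.ext_getElem_iff]

theorem permOv_map_range_iff (h : i + ℓ ≤ n) :
    PermOv ((List.range n).map w) i ℓ ↔ ∃ j < i, ∀ d < ℓ, w (j + d) = w (i + d) := by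
  refine exists_congr fun j => and_congr_right fun hj => ?_
  rw [take_drop_map_range w h, take_drop_map_range w (by omega), map_range'_eq_map_range'_iff]

theorem phrasesFrom_map_range {P : List α → ℕ → ℕ → Prop} (h : i + ℓ ≤ n)
    (hℓ : phraseLen P ((List.range n).map w) i = ℓ) :
    phrasesFrom P ((List.range n).map w) i =
      (List.range' i ℓ).map w :: phrasesFrom P ((List.range n).map w) (i + ℓ) := by
  have : 1 ≤ ℓ := hℓ ▸ le_max_left _ _
  rw [phrasesFrom_of_lt_length (by simp; omega), hℓ, take_drop_map_range w h]

end WordPrefix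

section BlockWord

def blockStart (m : ℕ) : ℕ := 2 ^ (m + 1) - 2 + m

/-- The infinite word `aab · aab³ · aab⁷ ⋯`, whose `m`-th block `aab^(2^(m+1)-1)` starts at
`blockStart m`. -/
noncomputable def word (p : ℕ) : Fin 2 :=
  if ∃ m, p = blockStart m ∨ p = blockStart m + 1 then la else lb

theorem la_ne_lb : la ≠ lb := by decide

theorem blockStart_succ (m : ℕ) : blockStart (m + 1) = blockStart m + 2 ^ (m + 1) + 1 := by
  have : 2 ≤ 2 ^ (m + 1) := Nat.le_self_pow (by omega) 2
  rw [blockStart, blockStart, pow_succ 2 (m + 1)]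
  omega

theorem blockStart_strictMono : StrictMono blockStart :=
  strictMono_nat_of_lt_succ fun m => by
    rw [blockStart_succ]
    exact Nat.lt_succ_of_le (Nat.le_add_right _ _)

theorem word_eq_la_iff {p : ℕ} : word p = la ↔ ∃ m, p = blockStart m ∨ p = blockStart m + 1 := by
  unfold word
  split_ifs with h
  · exact iff_of_true rfl h
  · exact iff_of_false la_ne_lb.symm h

theorem word_blockStart (m : ℕ) : word (blockStart m) = la :=
  word_eq_la_iff.mpr ⟨m, Or.inl rfl⟩

theorem word_blockStart_add_one (m : ℕ) : word (blockStart m + 1) = la :=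
  word_eq_la_iff.mpr ⟨m, Or.inr rfl⟩

theorem word_eq_lb {m p : ℕ} (h₁ : blockStart m + 2 ≤ p) (h₂ : p < blockStart (m + 1)) :
    word p = lb := by
  refine if_neg ?_
  rintro ⟨m', hm'⟩
  rcases Nat.lt_or_ge m' (m + 1) with h | h
  · have := blockStart_strictMono.monotone (Nat.lt_succ_iff.mp h)
    omega
  · have := blockStart_strictMono.monotone h
    omega

theorem word_blockStart_add {m d : ℕ} (hd : d ≤ 2 ^ (m + 1)) :
    word (blockStart m + d) = if d < 2 then la else lb := by
  match d with
  | 0 => exact word_blockStart m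
  | 1 => exact word_blockStart_add_one m
  | e + 2 => exact word_eq_lb (m := m) (by omega) (by rw [blockStart_succ]; omega)

theorem eq_blockStart_of_word_eq_la {p : ℕ} (h₀ : word p = la) (h₁ : word (p + 1) = la) :
    ∃ m, p = blockStart m := by
  obtain ⟨m, hm | hm⟩ := word_eq_la_iff.mp h₀
  · exact ⟨m, hm⟩
  · have := Nat.one_le_two_pow (n := m)
    exact absurd (h₁.symm.trans (word_eq_lb (m := m) (by omega) (by rw [blockStart_succ]; omega)))
      la_ne_lb

theorem blockStart_le_of_aab_pow {n p : ℕ} (h₀ : word p = la) (h₁ : word (p + 1) = la)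
    (hb : ∀ d < 2 ^ n, word (p + 2 + d) = lb) : blockStart n ≤ p := by
  obtain ⟨m, rfl⟩ := eq_blockStart_of_word_eq_la h₀ h₁
  have := Nat.one_le_two_pow (n := m)
  by_contra! hlt
  have hpow : 2 ^ (m + 1) ≤ 2 ^ n :=
    Nat.pow_le_pow_right (by omega) (blockStart_strictMono.lt_iff_lt.mp hlt)
  have := hb (2 ^ (m + 1) - 1) (by omega)
  rw [show blockStart m + 2 + (2 ^ (m + 1) - 1) = blockStart (m + 1) by
    rw [blockStart_succ]; omega, word_blockStart] at this
  exact la_ne_lb this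

theorem blockStart_le_of_pow_b_a {n p : ℕ} (hb : ∀ d < 2 ^ n, word (p + d) = lb)
    (ha : word (p + 2 ^ n) = la) : blockStart (n + 1) ≤ p + 2 ^ n := by
  have hpos := Nat.one_le_two_pow (n := n)
  obtain ⟨m, hm | hm⟩ := word_eq_la_iff.mp ha
  · by_contra! hlt
    have hmn : m ≤ n := Nat.lt_succ_iff.mp (blockStart_strictMono.lt_iff_lt.mp (hm ▸ hlt))
    cases m with
    | zero => simp [blockStart] at hm
    | succ u =>
      have hpow : 2 ^ (u + 1) ≤ 2 ^ n := Nat.pow_le_pow_right (by omega) hmn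
      have := Nat.one_le_two_pow (n := u)
      rw [blockStart_succ] at hm
      have := hb (2 ^ n - 2 ^ (u + 1)) (by omega)
      rw [show p + (2 ^ n - 2 ^ (u + 1)) = blockStart u + 1 by omega,
        word_blockStart_add_one] at this
      exact la_ne_lb this
  · have := hb (2 ^ n - 1) (by omega)
    rw [show p + (2 ^ n - 1) = blockStart m by omega, word_blockStart] at this
    exact absurd this la_ne_lb

theorem map_word_range'_eq_replicate {m i ℓ : ℕ} (h₁ : blockStart m + 2 ≤ i)
    (h₂ : i + ℓ ≤ blockStart (m + 1)) : (List.range' i ℓ).map word = List.replicate ℓ lb := by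
  conv_rhs => rw [← List.length_range' (s := i) (n := ℓ) (step := 1)]
  refine List.map_eq_replicate_iff.mpr fun p hp => ?_
  rw [List.mem_range'_1] at hp
  exact word_eq_lb (m := m) (by omega) (by omega)

theorem map_word_range'_blockStart {m ℓ : ℕ} (h : ℓ < 2 ^ (m + 1)) :
    (List.range' (blockStart m) (2 + ℓ)).map word = [la, la] ++ List.replicate ℓ lb := by
  have := Nat.one_le_two_pow (n := m)
  rw [← List.range'_append, List.map_append,
    map_word_range'_eq_replicate (m := m) (i := blockStart m + 1 * 2) (by omega)
      (by rw [blockStart_succ]; omega)]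
  simp [List.range'_succ, word_blockStart, word_blockStart_add_one]

theorem word_sub_add_eq_word_add {t d : ℕ} (hd : d < 3 * 2 ^ t) :
    word (blockStart t - (2 ^ t - 1) + d) = word (blockStart t + 2 ^ t + 2 + d) := by
  have hA := blockStart_succ t
  have hpos := Nat.one_le_two_pow (n := t)
  have hpow : 2 ^ (t + 2) = 4 * 2 ^ t := by ring
  have hAt : 2 ^ t ≤ blockStart t + 1 := by rw [blockStart, pow_succ]; omega
  rcases Nat.lt_or_ge d (2 ^ t - 1) with hd' | hd'
  · obtain ⟨u, rfl⟩ : ∃ u, t = u + 1 :=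
      Nat.exists_eq_succ_of_ne_zero (by rintro rfl; simp at hd')
    have hu := blockStart_succ u
    have hpos' := Nat.one_le_two_pow (n := u)
    rw [show blockStart (u + 1) - (2 ^ (u + 1) - 1) + d = blockStart u + (2 + d) by omega,
      show blockStart (u + 1) + 2 ^ (u + 1) + 2 + d = blockStart (u + 1) + (2 ^ (u + 1) + 2 + d)
        by omega,
      word_blockStart_add (m := u) (by omega), word_blockStart_add (m := u + 1) (by omega),
      if_neg (by omega), if_neg (by omega)]
  · rw [show blockStart t - (2 ^ t - 1) + d = blockStart t + (d - (2 ^ t - 1)) by omega,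
      show blockStart t + 2 ^ t + 2 + d = blockStart (t + 1) + (d - (2 ^ t - 1)) by omega,
      word_blockStart_add (m := t) (by omega), word_blockStart_add (m := t + 1) (by omega)]

end BlockWord

def exLen (k : ℕ) : ℕ := blockStart (k - 2) + 2 ^ (k - 2) + 2

theorem blockStart_add_two_pow_le_exLen {m k : ℕ} (h : m + 2 ≤ k) :
    blockStart m + 2 ^ m + 2 ≤ exLen k := by
  have hmono : Monotone fun m => blockStart m + 2 ^ m :=
    monotone_nat_of_le_succ fun m => by rw [blockStart_succ, pow_succ]; omega
  exact Nat.add_le_add_right (hmono (Nat.le_sub_of_add_le h)) 2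

theorem map_word_range_blockStart (n : ℕ) :
    (List.range (blockStart n)).map word =
      (List.range n).flatMap fun t => [la, la] ++ List.replicate (2 ^ (t + 1) - 1) lb := by
  induction n with
  | zero => rfl
  | succ n ih =>
    have := Nat.one_le_two_pow (n := n)
    rw [List.range_succ, List.flatMap_append, ← ih, List.flatMap_singleton,
      ← map_word_range'_blockStart (m := n) (by omega), ← List.map_append,
      ← range_add_eq_append_range', blockStart_succ]
    congr 2
    omega

theorem exStr_eq_map_range (k : ℕ) : exStr k = (List.range (exLen k)).map word := by
  have := Nat.one_le_two_pow (n := k - 2)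
  rw [exStr, ← map_word_range_blockStart,
    ← map_word_range'_blockStart (m := k - 2) (by rw [pow_succ]; omega),
    ← List.map_append, ← range_add_eq_append_range', exLen]
  congr 2
  omega

section Parsings

variable {n t : ℕ}

theorem word_zero : word 0 = la := word_blockStart 0

theorem word_one : word 1 = la := word_blockStart_add_one 0

theorem word_two : word 2 = lb := word_eq_lb (m := 0) le_rfl (by decide)

theorem permOv_one_one (h : 2 ≤ n) : PermOv ((List.range n).map word) 1 1 :=
  (permOv_map_range_iff word h).mpr ⟨0, one_pos, fun d hd => by
    obtain rfl := Nat.lt_one_iff.mp hd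
    exact word_zero.trans word_one.symm⟩

theorem not_permOv_one_two (h : 3 ≤ n) : ¬ PermOv ((List.range n).map word) 1 2 := by
  rw [permOv_map_range_iff word h]
  rintro ⟨j, hj, hw⟩
  obtain rfl : j = 0 := by omega
  exact la_ne_lb (word_one.symm.trans ((hw 1 one_lt_two).trans word_two))

theorem not_permOv_two_one (h : 3 ≤ n) : ¬ PermOv ((List.range n).map word) 2 1 := by
  rw [permOv_map_range_iff word h]
  rintro ⟨j, hj, hw⟩
  have hj : word j = la := by interval_cases j; exacts [word_zero, word_one]
  exact la_ne_lb (hj.symm.trans ((hw 0 one_pos).trans word_two))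

theorem phraseLen_permOv_one (h : 3 ≤ n) : phraseLen PermOv ((List.range n).map word) 1 = 1 :=
  phraseLen_eq_of_antitone (permOv_antitone _ _) le_rfl (by simp; omega)
    (permOv_one_one (by omega)) fun _ => not_permOv_one_two h

theorem phraseLen_permOv_two (h : 3 ≤ n) : phraseLen PermOv ((List.range n).map word) 2 = 1 :=
  phraseLen_eq_one_of_not (permOv_antitone _ _) (not_permOv_two_one h)

theorem phraseLen_permOv3_one (h : 3 ≤ n) : phraseLen PermOv3 ((List.range n).map word) 1 = 2 :=
  phraseLen_eq_of_antitone (permOv3_antitone _ _) one_le_two (by simp; omega)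
    (permOv_one_one (by omega)) fun _ => not_permOv_one_two h

theorem phraseLen_permOv_blockStart (h : blockStart (t + 1) + 2 ^ (t + 1) + 2 ≤ n) :
    phraseLen PermOv ((List.range n).map word) (blockStart (t + 1)) = 2 ^ (t + 1) + 1 := by
  have hpos := Nat.one_le_two_pow (n := t)
  have hpow : 2 ^ (t + 2) = 4 * 2 ^ t := by ring
  refine phraseLen_eq_of_antitone (permOv_antitone _ _) (by omega) (by simp; omega) ?_ fun _ => ?_
  · rw [permOv_map_range_iff word (by omega)]
    refine ⟨blockStart t, blockStart_strictMono (Nat.lt_succ_self t), fun d hd => ?_⟩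
    rw [word_blockStart_add (by omega), word_blockStart_add (by omega)]
  · rw [permOv_map_range_iff word (by omega)]
    rintro ⟨j, hj, hw⟩
    have := blockStart_le_of_aab_pow (n := t + 1) (p := j)
      ((hw 0 (by omega)).trans (word_blockStart _))
      ((hw 1 (by omega)).trans (word_blockStart_add_one _)) fun d hd => by
        rw [Nat.add_assoc, hw (2 + d) (by omega), word_blockStart_add (by omega), if_neg (by omega)]
    omega

theorem phraseLen_permOv_bRun (h : blockStart (t + 2) < n) :
    phraseLen PermOv ((List.range n).map word) (blockStart (t + 1) + 2 ^ (t + 1) + 1) =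
      2 ^ (t + 1) := by
  have hA : blockStart (t + 2) = blockStart (t + 1) + 2 ^ (t + 2) + 1 := blockStart_succ (t + 1)
  have hpos := Nat.one_le_two_pow (n := t)
  have hpow : 2 ^ (t + 2) = 4 * 2 ^ t := by ring
  have hb : ∀ d < 2 ^ (t + 1) + 1, word (blockStart (t + 1) + 2 ^ (t + 1) + d) = lb :=
    fun d hd => word_eq_lb (m := t + 1) (by omega) (by rw [hA]; omega)
  refine phraseLen_eq_of_antitone (permOv_antitone _ _) (by omega) (by simp; omega) ?_ fun _ => ?_
  · rw [permOv_map_range_iff word (by omega)]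
    refine ⟨blockStart (t + 1) + 2 ^ (t + 1), by omega, fun d hd => ?_⟩
    rw [hb d (by omega), Nat.add_assoc _ 1, Nat.add_comm 1, hb (d + 1) (by omega)]
  · rw [permOv_map_range_iff word (by omega)]
    rintro ⟨j, hj, hw⟩
    have := blockStart_le_of_pow_b_a (n := t + 1) (p := j)
      (fun d hd => by rw [hw d (by omega), Nat.add_assoc _ 1, Nat.add_comm 1, hb _ (by omega)])
      (by rw [hw _ (by omega), show blockStart (t + 1) + 2 ^ (t + 1) + 1 + 2 ^ (t + 1) =
        blockStart (t + 2) by omega, word_blockStart])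
    rw [hA] at this
    omega

theorem phraseLen_permOv3_blockStart (h : blockStart (t + 1) + 2 ^ (t + 1) + 2 ≤ n) :
    phraseLen PermOv3 ((List.range n).map word) (blockStart t + 2 ^ t + 2) = 3 * 2 ^ t + 1 := by
  have hA := blockStart_succ t
  have hpos := Nat.one_le_two_pow (n := t)
  have hpow : 2 ^ (t + 2) = 4 * 2 ^ t := by ring
  refine phraseLen_eq_of_antitone (permOv3_antitone _ _) (by omega) (by simp; omega) ?_ fun _ => ?_
  · show PermOv _ _ (3 * 2 ^ t + 1 - 1)
    rw [permOv_map_range_iff word (by omega)]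
    exact ⟨blockStart t - (2 ^ t - 1), by omega, fun d hd => word_sub_add_eq_word_add (by omega)⟩
  · show ¬ PermOv _ _ (3 * 2 ^ t + 1 + 1 - 1)
    rw [permOv_map_range_iff word (by omega)]
    rintro ⟨j, hj, hw⟩
    have hw' : ∀ d < 2 ^ (t + 1) + 2,
        word (j + (2 ^ t - 1) + d) = word (blockStart (t + 1) + d) := fun d hd => by
      rw [Nat.add_assoc, hw _ (by omega)]
      congr 1
      omega
    have := blockStart_le_of_aab_pow (n := t + 1) (p := j + (2 ^ t - 1))
      ((hw' 0 (by omega)).trans (word_blockStart _))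
      ((hw' 1 (by omega)).trans (word_blockStart_add_one _)) fun d hd => by
        rw [Nat.add_assoc _ 2, hw' (2 + d) (by omega), word_blockStart_add (by omega),
          if_neg (by omega)]
    omega

theorem phrasesFrom_permOv_blockStart (h : blockStart (t + 1) + 2 ^ (t + 1) + 2 ≤ n) :
    phrasesFrom PermOv ((List.range n).map word) (blockStart (t + 1)) =
      ([la, la] ++ List.replicate (2 ^ (t + 1) - 1) lb) ::
        phrasesFrom PermOv ((List.range n).map word) (blockStart (t + 1) + 2 ^ (t + 1) + 1) := by
  have hpos := Nat.one_le_two_pow (n := t)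
  have hpow : 2 ^ (t + 2) = 4 * 2 ^ t := by ring
  rw [phrasesFrom_map_range word (by omega) (phraseLen_permOv_blockStart h)]
  congr 1
  rw [show 2 ^ (t + 1) + 1 = 2 + (2 ^ (t + 1) - 1) by omega]
  exact map_word_range'_blockStart (by omega)

theorem phrasesFrom_permOv_bRun (h : blockStart (t + 2) < n) :
    phrasesFrom PermOv ((List.range n).map word) (blockStart (t + 1) + 2 ^ (t + 1) + 1) =
      List.replicate (2 ^ (t + 1)) lb ::
        phrasesFrom PermOv ((List.range n).map word) (blockStart (t + 2)) := by
  have hA : blockStart (t + 2) = blockStart (t + 1) + 2 ^ (t + 2) + 1 := blockStart_succ (t + 1)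
  have hpos := Nat.one_le_two_pow (n := t)
  have hpow : 2 ^ (t + 2) = 4 * 2 ^ t := by ring
  rw [phrasesFrom_map_range word (by omega) (phraseLen_permOv_bRun h),
    map_word_range'_eq_replicate (m := t + 1) (by omega) (by rw [hA]; omega)]
  congr 2
  omega

theorem phrasesFrom_permOv3_blockStart (h : blockStart (t + 1) + 2 ^ (t + 1) + 2 ≤ n) :
    phrasesFrom PermOv3 ((List.range n).map word) (blockStart t + 2 ^ t + 2) =
      (List.replicate (2 ^ t - 1) lb ++ [la, la] ++ List.replicate (2 ^ (t + 1)) lb) ::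
        phrasesFrom PermOv3 ((List.range n).map word) (blockStart (t + 1) + 2 ^ (t + 1) + 2) := by
  have hA := blockStart_succ t
  have hpos := Nat.one_le_two_pow (n := t)
  have hpow : 2 ^ (t + 2) = 4 * 2 ^ t := by ring
  rw [phrasesFrom_map_range word (by omega) (phraseLen_permOv3_blockStart h)]
  congr 1
  · rw [show 3 * 2 ^ t + 1 = 2 ^ t - 1 + (2 + 2 ^ (t + 1)) by omega, ← List.range'_append_1,
      List.map_append, map_word_range'_eq_replicate (m := t) (by omega) (by omega),
      show blockStart t + 2 ^ t + 2 + (2 ^ t - 1) = blockStart (t + 1) by omega,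
      map_word_range'_blockStart (by omega), List.append_assoc]
  · congr 1
    omega

end Parsings

theorem phrasesFrom_permOv_tail {k : ℕ} : ∀ r t, t + r + 3 = k →
    phrasesFrom PermOv ((List.range (exLen k)).map word) (blockStart (t + 1)) =
      (List.range' t (r + 1)).flatMap fun u =>
        [[la, la] ++ List.replicate (2 ^ (u + 1) - 1) lb,
          if u = k - 3 then [lb] else List.replicate (2 ^ (u + 1)) lb]
  | 0, t, hk => by
    have hlen : exLen k = blockStart (t + 1) + 2 ^ (t + 1) + 2 := by
      rw [exLen, show k - 2 = t + 1 by omega]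
    have hA : blockStart (t + 2) = blockStart (t + 1) + 2 ^ (t + 2) + 1 := blockStart_succ (t + 1)
    have hpos := Nat.one_le_two_pow (n := t)
    have hpow : 2 ^ (t + 2) = 4 * 2 ^ t := by ring
    rw [phrasesFrom_permOv_blockStart hlen.ge,
      phrasesFrom_map_range word (by omega) (phraseLen_eq_one_of_length_le (by simp; omega)),
      map_word_range'_eq_replicate (m := t + 1) (by omega) (by rw [hA]; omega),
      phrasesFrom_of_length_le (by simp; omega)]
    simp [show t = k - 3 by omega]
  | r + 1, t, hk => by
    rw [phrasesFrom_permOv_blockStart (blockStart_add_two_pow_le_exLen (by omega)),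
      phrasesFrom_permOv_bRun (by
        have := blockStart_add_two_pow_le_exLen (m := t + 2) (k := k) (by omega)
        have := Nat.one_le_two_pow (n := t + 2)
        omega),
      phrasesFrom_permOv_tail r (t + 1) (by omega)]
    conv_rhs => rw [List.range'_succ, List.flatMap_cons]
    simp [show t ≠ k - 3 by omega]

theorem phrasesFrom_permOv3_tail {k : ℕ} : ∀ r t, t + r + 3 = k →
    phrasesFrom PermOv3 ((List.range (exLen k)).map word) (blockStart t + 2 ^ t + 2) =
      (List.range' t (r + 1)).map fun u =>
        List.replicate (2 ^ u - 1) lb ++ [la, la] ++ List.replicate (2 ^ (u + 1)) lb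
  | 0, t, hk => by
    rw [phrasesFrom_permOv3_blockStart (blockStart_add_two_pow_le_exLen (by omega)),
      phrasesFrom_of_length_le (by simp [exLen, show k - 2 = t + 1 by omega])]
    rfl
  | r + 1, t, hk => by
    rw [phrasesFrom_permOv3_blockStart (blockStart_add_two_pow_le_exLen (by omega)),
      phrasesFrom_permOv3_tail r (t + 1) (by omega)]
    conv_rhs => rw [List.range'_succ, List.map_cons]

theorem lzPhrases_exStr {k : ℕ} (hk : 2 ≤ k) : lzPhrases (exStr k) = exLZParse k := by
  have h3 : 3 ≤ exLen k := blockStart_add_two_pow_le_exLen (m := 0) hk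
  rw [lzPhrases, exStr_eq_map_range,
    phrasesFrom_map_range word (by omega)
      (phraseLen_eq_one_of_not (permOv_antitone _ _) (not_permOv_zero _ _)),
    phrasesFrom_map_range word (by omega) (phraseLen_permOv_one h3),
    phrasesFrom_map_range word (by omega) (phraseLen_permOv_two h3), exLZParse]
  obtain rfl | hk := hk.eq_or_lt
  · rw [phrasesFrom_of_length_le (by simp [exLen, blockStart])]
    simp [word_zero, word_one, word_two]
  · rw [show 0 + 1 + 1 + 1 = blockStart (0 + 1) from rfl,
      phrasesFrom_permOv_tail (k - 3) 0 (by omega), List.range_eq_range',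
      show k - 2 = k - 3 + 1 by omega]
    simp [word_zero, word_one, word_two]

theorem lz3Phrases_exStr {k : ℕ} (hk : 2 ≤ k) : lz3Phrases (exStr k) = exLZ3Parse k := by
  have h3 : 3 ≤ exLen k := blockStart_add_two_pow_le_exLen (m := 0) hk
  rw [lz3Phrases, exStr_eq_map_range,
    phrasesFrom_map_range word (by omega)
      (phraseLen_eq_one_of_not (permOv3_antitone _ _) (not_permOv_zero _ 0)),
    phrasesFrom_map_range word (by omega) (phraseLen_permOv3_one h3), exLZ3Parse]
  obtain rfl | hk := hk.eq_or_lt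
  · rw [phrasesFrom_of_length_le (by simp [exLen, blockStart])]
    simp [List.range'_succ, word_zero, word_one, word_two]
  · rw [show 0 + 1 + 2 = blockStart 0 + 2 ^ 0 + 2 from rfl,
      phrasesFrom_permOv3_tail (k - 3) 0 (by omega), List.range_eq_range',
      show k - 2 = k - 3 + 1 by omega]
    simp [List.range'_succ, word_zero, word_one, word_two]

theorem exLZParse_length {k : ℕ} (hk : 2 ≤ k) : (exLZParse k).length = 2 * k - 1 := by
  simp [exLZParse, List.length_flatMap]
  omega

theorem exLZ3Parse_length {k : ℕ} (hk : 2 ≤ k) : (exLZ3Parse k).length = k := by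
  simp [exLZ3Parse]
  omega

/-- For every `k ≥ 1` there is a binary string with `Zov₃ = k` and `Zov = 2k - 1`.
In particular, for `k ≥ 2` the string `aab·aab³·aab⁷ ⋯ aab^(2^(k-2)-1)·aab^(2^(k-2))` has
LZ parsing `a.a.b.aab.b².aab³.b⁴.⋯.aab^(2^(k-2)-1).b` of size `2k - 1` and LZ3 parsing
`a.ab.aabb.baab⁴.b³aab⁸.⋯.b^(2^(k-3)-1)aab^(2^(k-2))` of size `k`. -/
theorem exists_zOv3_half_zOv :
    (∀ k : ℕ, 1 ≤ k → ∃ s : List (Fin 2), zOv3 s = k ∧ zOv s = 2 * k - 1) ∧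
    (∀ k : ℕ, 2 ≤ k →
      lzPhrases (exStr k) = exLZParse k ∧ (exLZParse k).length = 2 * k - 1 ∧
      lz3Phrases (exStr k) = exLZ3Parse k ∧ (exLZ3Parse k).length = k) := by
  refine ⟨fun k hk => ?_, fun k hk =>
    ⟨lzPhrases_exStr hk, exLZParse_length hk, lz3Phrases_exStr hk, exLZ3Parse_length hk⟩⟩
  obtain rfl | hk := hk.eq_or_lt
  · exact ⟨[la], by rw [zOv3, lz3Phrases, phrasesFrom_singleton]; rfl,
      by rw [zOv, lzPhrases, phrasesFrom_singleton]; rfl⟩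
  · exact ⟨exStr k, by rw [zOv3, lz3Phrases_exStr hk, exLZ3Parse_length hk],
      by rw [zOv, lzPhrases_exStr hk, exLZParse_length hk]⟩

end Example15
end

section
/- For every integer k ≥ 1 there exists a string over a binary alphabet whose novLZ parsing and novLZ3 parsing both have size exactly k (i.e., Znon = Znon3 = k). In particular, for k ≥ 2 the string (ab)^{2^{k−2}} satisfies Znon = Znon3 = k. -/
attribute [local instance] Classical.propDecidable

section Aux

abbrev S (m : ℕ) : List (Fin 2) := (List.replicate m [(0:Fin 2),(1:Fin 2)]).flatten

lemma S_length (m : ℕ) : (S m).length = 2*m := by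
  simp [S, mul_comm]

lemma S_getElem (m t : ℕ) (h : t < (S m).length) : (S m)[t] = if t % 2 = 0 then 0 else 1 := by
  induction m generalizing t with
  | zero => simp [S] at h
  | succ m ih =>
    show (0 :: 1 :: S m)[t]'_ = _
    match t with
    | 0 => simp
    | 1 => simp
    | (t+2) =>
      rw [List.getElem_cons_succ, List.getElem_cons_succ, ih]
      have h2 : (t+2) % 2 = t % 2 := by omega
      rw [h2]

lemma S_match (m j i ℓ : ℕ) (hji : j ≤ i) (hpar : j % 2 = i % 2) (hle : i + ℓ ≤ 2*m) :
    ((S m).drop j).take ℓ = ((S m).drop i).take ℓ := by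
  have hL := S_length m
  apply List.ext_getElem
  · simp; omega
  · intro t h1 h2
    simp only [List.getElem_take, List.getElem_drop]
    rw [S_getElem, S_getElem]
    have : (j + t) % 2 = (i + t) % 2 := by omega
    rw [this]

lemma S_mismatch (m j i ℓ : ℕ) (hpar : j % 2 ≠ i % 2) (hℓ : 1 ≤ ℓ) (hj : j < 2*m)
    (hi : i < 2*m) : ((S m).drop j).take ℓ ≠ ((S m).drop i).take ℓ := by
  have hL := S_length m
  intro h
  have h0 : (((S m).drop j).take ℓ)[0]'(by simp; omega)
      = (((S m).drop i).take ℓ)[0]'(by simp; omega) := by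
    simp [h]
  simp only [List.getElem_take, List.getElem_drop] at h0
  rw [S_getElem, S_getElem] at h0
  rcases Nat.mod_two_eq_zero_or_one j with hj2 | hj2 <;>
    rcases Nat.mod_two_eq_zero_or_one i with hi2 | hi2 <;>
    simp [hj2, hi2] at h0 hpar

lemma phraseLen_eq {α : Type*} (P : List α → ℕ → ℕ → Prop) (s : List α) (i L : ℕ)
    (h4 : 1 ≤ L) (h1 : L ≤ s.length - i) (h2 : P s i L)
    (h3 : ∀ ℓ, L < ℓ → ℓ ≤ s.length - i → ¬ P s i ℓ) :
    phraseLen P s i = L := by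
  unfold phraseLen
  have : Nat.findGreatest (fun ℓ => P s i ℓ) (s.length - i) = L := by
    rw [Nat.findGreatest_eq_iff]
    exact ⟨h1, fun _ => h2, fun n hn hn2 => h3 n hn hn2⟩
  rw [this]; omega

lemma phraseLen_eq_one {α : Type*} (P : List α → ℕ → ℕ → Prop) (s : List α) (i : ℕ)
    (h3 : ∀ ℓ, 1 ≤ ℓ → ℓ ≤ s.length - i → ¬ P s i ℓ) :
    phraseLen P s i = 1 := by
  unfold phraseLen
  have : Nat.findGreatest (fun ℓ => P s i ℓ) (s.length - i) = 0 := by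
    rw [Nat.findGreatest_eq_iff]
    exact ⟨Nat.zero_le _, fun h => absurd rfl h, fun n hn hn2 => h3 n hn hn2⟩
  rw [this]
  simp

lemma phrasesFrom_length_lt {α : Type*} (P : List α → ℕ → ℕ → Prop) (s : List α) (i : ℕ)
    (h : i < s.length) :
    (phrasesFrom P s i).length = (phrasesFrom P s (i + phraseLen P s i)).length + 1 := by
  rw [phrasesFrom]
  rw [dif_pos h]
  simp

lemma phrasesFrom_nil {α : Type*} (P : List α → ℕ → ℕ → Prop) (s : List α) (i : ℕ)
    (h : s.length ≤ i) : phrasesFrom P s i = [] := by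
  rw [phrasesFrom]
  rw [dif_neg (by omega)]

/-! phraseLen computations on `S m` -/

lemma phraseLen_nov_zero (m : ℕ) : phraseLen PermNov (S m) 0 = 1 := by
  apply phraseLen_eq_one
  rintro ℓ h1 h2 ⟨j, hj, -⟩
  omega

lemma phraseLen_nov_one (m : ℕ) (hm : 1 ≤ m) : phraseLen PermNov (S m) 1 = 1 := by
  apply phraseLen_eq_one
  rintro ℓ h1 h2 ⟨j, hj, heq⟩
  have hj0 : j = 0 ∧ ℓ = 1 := by omega
  obtain ⟨rfl, rfl⟩ := hj0
  exact S_mismatch m 0 1 1 (by omega) le_rfl (by omega) (by omega) heq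

lemma phraseLen_nov_even (m i : ℕ) (h2 : 2 ≤ i) (he : i % 2 = 0) (hlt : i < 2*m) :
    phraseLen PermNov (S m) i = min i (2*m - i) := by
  have hL := S_length m
  apply phraseLen_eq
  · omega
  · omega
  · exact ⟨0, by omega, S_match m 0 i _ (by omega) (by omega) (by omega)⟩
  · rintro ℓ hgt hle ⟨j, hj, -⟩
    omega

lemma phraseLen_nov3_small (m i : ℕ) (hi : i ≤ 1) (him : i < 2*m) :
    phraseLen PermNov3 (S m) i = 1 := by
  have hL := S_length m
  apply phraseLen_eq
  · omega
  · omega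
  · exact ⟨0, by omega, by simp⟩
  · rintro ℓ hgt hle ⟨j, hj, heq⟩
    have hj0 : j = 0 ∧ ℓ = 2 ∧ i = 1 := by omega
    obtain ⟨rfl, rfl, rfl⟩ := hj0
    exact S_mismatch m 0 1 1 (by omega) le_rfl (by omega) (by omega) heq

lemma phraseLen_nov3_even (m i : ℕ) (h2 : 2 ≤ i) (he : i % 2 = 0) (hlt : i < 2*m) :
    phraseLen PermNov3 (S m) i = min (i+1) (2*m - i) := by
  have hL := S_length m
  apply phraseLen_eq
  · omega
  · omega
  · exact ⟨0, by omega, S_match m 0 i _ (by omega) (by omega) (by omega)⟩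
  · rintro ℓ hgt hle ⟨j, hj, -⟩
    omega

lemma phraseLen_nov3_odd (m i : ℕ) (h2 : 1 ≤ i) (ho : i % 2 = 1) (hlt : i < 2*m) :
    phraseLen PermNov3 (S m) i = min i (2*m - i) := by
  have hL := S_length m
  apply phraseLen_eq
  · omega
  · omega
  · exact ⟨1, by omega, S_match m 1 i _ (by omega) (by omega) (by omega)⟩
  · rintro ℓ hgt hle ⟨j, hj, heq⟩
    have hj0 : j = 0 ∧ ℓ = i + 1 := by omega
    obtain ⟨rfl, rfl⟩ := hj0
    have : i + 1 - 1 = i := by omega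
    rw [this] at heq
    exact S_mismatch m 0 i i (by omega) (by omega) (by omega) (by omega) heq

/-! the novLZ count -/

lemma nov_count (e : ℕ) : ∀ d t, 1 ≤ t → t + d = e →
    (phrasesFrom PermNov (S (2^e)) (2^t)).length = d + 1 := by
  intro d
  induction d with
  | zero =>
    intro t h1 h2
    have he : t = e := by omega
    subst he
    have hp : (2:ℕ)^t % 2 = 0 := by
      have : (2:ℕ)^t = 2 * 2^(t-1) := by
        rw [← pow_succ']; congr 1; omega
      omega
    have h2t : 2 ≤ (2:ℕ)^t := by
      calc (2:ℕ) = 2^1 := (pow_one 2).symm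
      _ ≤ 2^t := Nat.pow_le_pow_right (by norm_num) h1
    rw [phrasesFrom_length_lt _ _ _ (by rw [S_length]; omega)]
    rw [phraseLen_nov_even (2^t) (2^t) h2t hp (by omega)]
    rw [phrasesFrom_nil _ _ _ (by rw [S_length]; omega)]
    simp
  | succ d ih =>
    intro t h1 h2
    have hp : (2:ℕ)^t % 2 = 0 := by
      have : (2:ℕ)^t = 2 * 2^(t-1) := by
        rw [← pow_succ']; congr 1; omega
      omega
    have h2t : 2 ≤ (2:ℕ)^t := by
      calc (2:ℕ) = 2^1 := (pow_one 2).symm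
      _ ≤ 2^t := Nat.pow_le_pow_right (by norm_num) h1
    have hte : t < e := by omega
    have hmono : (2:ℕ)^t ≤ 2^e := Nat.pow_le_pow_right (by norm_num) (by omega)
    rw [phrasesFrom_length_lt _ _ _ (by rw [S_length]; omega)]
    rw [phraseLen_nov_even (2^e) (2^t) h2t hp (by omega)]
    have hmin : min (2^t) (2*2^e - 2^t) = 2^t := by omega
    rw [hmin]
    have hnext : (2:ℕ)^t + 2^t = 2^(t+1) := by ring
    rw [hnext, ih (t+1) (by omega) (by omega)]

/-! the novLZ3 count -/

def cseq : ℕ → ℕ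
  | 0 => 2
  | (u+1) => if cseq u % 2 = 0 then 2 * cseq u + 1 else 2 * cseq u

lemma cseq_inv (u : ℕ) : cseq u % 2 = u % 2 ∧ 3 * cseq u + 2 = 2^(u+3) + u % 2 := by
  induction u with
  | zero => simp [cseq]
  | succ u ih =>
    have hp : (2:ℕ)^(u+1+3) = 2*2^(u+3) := by ring
    by_cases h : cseq u % 2 = 0 <;> simp [cseq, h] <;> omega

lemma nov3_count (e : ℕ) (he : 1 ≤ e) : ∀ d u, u + d + 1 = e →
    (phrasesFrom PermNov3 (S (2^e)) (cseq u)).length = d + 1 := by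
  intro d
  induction d with
  | zero =>
    intro u h2
    obtain ⟨hcp, hcv⟩ := cseq_inv u
    have hA : (2:ℕ)^(u+3) = 2*2^(u+2) := by ring
    have h4 : (4:ℕ) ≤ 2^(u+2) := by
      calc (4:ℕ) = 2^2 := by norm_num
      _ ≤ 2^(u+2) := Nat.pow_le_pow_right (by norm_num) (by omega)
    have hn : 2*(2:ℕ)^e = 2^(u+2) := by
      have : e = u + 1 := by omega
      subst this; ring
    have hci : cseq u < 2*2^e := by omega
    rcases Nat.mod_two_eq_zero_or_one u with hu | hu
    · rw [phrasesFrom_length_lt _ _ _ (by rw [S_length]; omega)]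
      rw [phraseLen_nov3_even (2^e) (cseq u) (by omega) (by omega) hci]
      rw [phrasesFrom_nil _ _ _ (by rw [S_length]; omega)]
      simp
    · rw [phrasesFrom_length_lt _ _ _ (by rw [S_length]; omega)]
      rw [phraseLen_nov3_odd (2^e) (cseq u) (by omega) (by omega) hci]
      rw [phrasesFrom_nil _ _ _ (by rw [S_length]; omega)]
      simp
  | succ d ih =>
    intro u h2
    obtain ⟨hcp, hcv⟩ := cseq_inv u
    have hA : (2:ℕ)^(u+3) = 2*2^(u+2) := by ring
    have h4 : (4:ℕ) ≤ 2^(u+2) := by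
      calc (4:ℕ) = 2^2 := by norm_num
      _ ≤ 2^(u+2) := Nat.pow_le_pow_right (by norm_num) (by omega)
    have hn : (2:ℕ)^(u+3) ≤ 2^(e+1) := Nat.pow_le_pow_right (by norm_num) (by omega)
    have hn2 : 2*(2:ℕ)^e = 2^(e+1) := by ring
    have hci : cseq u < 2*2^e := by omega
    rcases Nat.mod_two_eq_zero_or_one u with hu | hu
    · rw [phrasesFrom_length_lt _ _ _ (by rw [S_length]; omega)]
      rw [phraseLen_nov3_even (2^e) (cseq u) (by omega) (by omega) hci]
      have hmin : min (cseq u + 1) (2*2^e - cseq u) = cseq u + 1 := by omega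
      rw [hmin]
      have hnext : cseq u + (cseq u + 1) = cseq (u+1) := by
        simp [cseq, hcp, hu]; omega
      rw [hnext, ih (u+1) (by omega)]
    · rw [phrasesFrom_length_lt _ _ _ (by rw [S_length]; omega)]
      rw [phraseLen_nov3_odd (2^e) (cseq u) (by omega) (by omega) hci]
      have hmin : min (cseq u) (2*2^e - cseq u) = cseq u := by omega
      rw [hmin]
      have hnext : cseq u + cseq u = cseq (u+1) := by
        simp [cseq, hcp, hu]; omega
      rw [hnext, ih (u+1) (by omega)]

lemma main2 (k : ℕ) (hk : 2 ≤ k) :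
    zNov (S (2^(k-2))) = k ∧ zNov3 (S (2^(k-2))) = k := by
  obtain ⟨e, rfl⟩ : ∃ e, k = e + 2 := ⟨k - 2, by omega⟩
  have hke : e + 2 - 2 = e := by omega
  rw [hke]
  have hL := S_length (2^e)
  have h1e : (1:ℕ) ≤ 2^e := Nat.one_le_two_pow
  constructor
  · show (phrasesFrom PermNov (S (2^e)) 0).length = e + 2
    rw [phrasesFrom_length_lt _ _ _ (by omega)]
    rw [phraseLen_nov_zero]
    rw [phrasesFrom_length_lt _ _ _ (by omega)]
    rw [phraseLen_nov_one _ h1e]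
    rcases Nat.eq_zero_or_pos e with he0 | he1
    · subst he0
      have h2e : (2:ℕ)^0 = 1 := by norm_num
      rw [phrasesFrom_nil _ _ _ (by omega)]
      simp
    · have := nov_count e (e-1) 1 le_rfl (by omega)
      rw [show (0:ℕ) + 1 + 1 = 2^1 by norm_num, this]
      omega
  · show (phrasesFrom PermNov3 (S (2^e)) 0).length = e + 2
    rw [phrasesFrom_length_lt _ _ _ (by omega)]
    rw [phraseLen_nov3_small _ _ (by omega) (by omega)]
    rw [phrasesFrom_length_lt _ _ _ (by omega)]
    rw [phraseLen_nov3_small _ _ (by omega) (by omega)]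
    rcases Nat.eq_zero_or_pos e with he0 | he1
    · subst he0
      have h2e : (2:ℕ)^0 = 1 := by norm_num
      rw [phrasesFrom_nil _ _ _ (by omega)]
      simp
    · have := nov3_count e he1 (e-1) 0 (by omega)
      rw [show (0:ℕ) + 1 + 1 = cseq 0 by rfl, this]
      omega

end Aux

/-- For every integer `k ≥ 1` there is a binary string whose novLZ and novLZ3 parsings both
have size exactly `k`. In particular, for `k ≥ 2` the string `(ab)^(2^(k-2))` satisfies
`Znon = Znon₃ = k`. -/
theorem exists_zNov_eq_zNov3 :
    (∀ k : ℕ, 1 ≤ k → ∃ s : List (Fin 2), zNov s = k ∧ zNov3 s = k) ∧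
    (∀ k : ℕ, 2 ≤ k →
      zNov ((List.replicate (2 ^ (k - 2)) [(0 : Fin 2), (1 : Fin 2)]).flatten) = k ∧
      zNov3 ((List.replicate (2 ^ (k - 2)) [(0 : Fin 2), (1 : Fin 2)]).flatten) = k) := by
  have hone : zNov [(0 : Fin 2)] = 1 ∧ zNov3 [(0 : Fin 2)] = 1 := by
    constructor
    · show (phrasesFrom PermNov [(0 : Fin 2)] 0).length = 1
      rw [phrasesFrom_length_lt _ _ _ (by simp)]
      rw [phraseLen_eq_one _ _ _ (by rintro ℓ h1 h2 ⟨j, hj, -⟩; omega)]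
      rw [phrasesFrom_nil _ _ _ (by simp)]
      simp
    · show (phrasesFrom PermNov3 [(0 : Fin 2)] 0).length = 1
      rw [phrasesFrom_length_lt _ _ _ (by simp)]
      rw [phraseLen_eq _ _ _ 1 le_rfl (by simp) ⟨0, by omega, by simp⟩
        (by rintro ℓ h1 h2 ⟨j, hj, -⟩; simp at h2; omega)]
      rw [phrasesFrom_nil _ _ _ (by simp)]
      simp
  constructor
  · intro k hk
    rcases Nat.lt_or_ge k 2 with h2 | h2
    · have : k = 1 := by omega
      subst this
      exact ⟨[(0 : Fin 2)], hone⟩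
    · exact ⟨_, main2 k h2⟩
  · intro k hk
    exact main2 k hk
end

section
/- Let a and b be two distinct letters and d ≥ 1 an integer. Suppose u = a b^{d−1} v and u' = a b^{d−1} v' where v and v' are strings of length d (over any alphabet containing a and b). If u and u' are conjugate (i.e., u = xy and u' = yx for some strings x, y), then u = u'. -/
private lemma P_getElem {α : Type*} (a b : α) (d k : ℕ) (hd : 1 ≤ d) (hk : k < d)
    (h0 : k ≠ 0) :
    (a :: List.replicate (d - 1) b)[k]'(by simp; omega) = b := by
  obtain ⟨j, rfl⟩ : ∃ j, k = j + 1 := ⟨k - 1, by omega⟩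
  rw [List.getElem_cons_succ, List.getElem_replicate]

/-- Let `a ≠ b` be letters and `d ≥ 1`. If `u = a·b^(d-1)·v` and `u' = a·b^(d-1)·v'` with
`|v| = |v'| = d`, and `u` and `u'` are conjugate (`u = x·y` and `u' = y·x` for some strings
`x`, `y`), then `u = u'`. -/
theorem conjugate_eq_of_ab_prefix {α : Type*} (a b : α) (hab : a ≠ b) (d : ℕ) (hd : 1 ≤ d)
    (v v' : List α) (hv : v.length = d) (hv' : v'.length = d)
    (u u' : List α)
    (hu : u = a :: (List.replicate (d - 1) b ++ v))
    (hu' : u' = a :: (List.replicate (d - 1) b ++ v'))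
    (hconj : ∃ x y : List α, u = x ++ y ∧ u' = y ++ x) :
    u = u' := by
  set P : List α := a :: List.replicate (d - 1) b with hP
  have hPlen : P.length = d := by simp [hP]; omega
  rw [← List.cons_append] at hu hu'
  rw [← hP] at hu hu'
  obtain ⟨x, y, hxy, hyx⟩ := hconj
  have hulen : u.length = 2 * d := by rw [hu]; simp [hPlen, hv]; omega
  have hulen' : u'.length = 2 * d := by rw [hu']; simp [hPlen, hv']; omega
  have hxylen : x.length + y.length = 2 * d := by
    have := congrArg List.length hxy
    simp at this; omega
  rcases Nat.eq_zero_or_pos x.length with hx0 | hxpos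
  · rw [List.eq_nil_of_length_eq_zero hx0] at hxy hyx
    simp at hxy hyx; rw [hxy, hyx]
  rcases Nat.eq_zero_or_pos y.length with hy0 | hypos
  · rw [List.eq_nil_of_length_eq_zero hy0] at hxy hyx
    simp at hxy hyx; rw [hxy, hyx]
  have hug : ∀ i (hi : i < d), u[i]'(by omega) = P[i]'(by omega) := by
    intro i hi
    rw [List.getElem_of_eq hu (by omega)]
    exact List.getElem_append_left (by omega)
  have hug' : ∀ i (hi : i < d), u'[i]'(by omega) = P[i]'(by omega) := by
    intro i hi
    rw [List.getElem_of_eq hu' (by omega)]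
    exact List.getElem_append_left (by omega)
  rcases lt_trichotomy x.length d with hkd | hkd | hkd
  · -- 1 ≤ |x| ≤ d - 1 : u'[0] = y[0] = u[|x|] = b but u'[0] = a
    exfalso
    have e1 : u'[0]'(by omega) = y[0]'(by omega) := by
      rw [List.getElem_of_eq hyx (by omega)]
      exact List.getElem_append_left (by omega)
    have e2 : u[x.length]'(by omega) = y[0]'(by omega) := by
      rw [List.getElem_of_eq hxy (by omega),
        List.getElem_append_right (by omega)]
      simp
    have h2 : u[x.length]'(by omega) = b := by
      rw [hug x.length hkd]
      exact (List.getElem_of_eq hP (by omega)).trans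
        (P_getElem a b d x.length hd hkd (by omega))
    have h3 : u'[0]'(by omega) = a := by
      rw [hug' 0 (by omega)]; simp [hP]
    rw [h3, ← e2, h2] at e1
    exact hab e1
  · -- |x| = d : x = P, y = v
    have hx : x = P := by
      have := congrArg (List.take d) hxy
      rw [hu, List.take_left' hPlen, List.take_left' hkd] at this
      exact this.symm
    have hyv : y = v := by
      have := congrArg (List.drop d) hxy
      rw [hu, List.drop_left' hPlen, List.drop_left' hkd] at this
      exact this.symm
    rw [hx, hyv] at hyx
    rw [hu'] at hyx
    -- hyx : P ++ v' = v ++ P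
    have hvP : v = P := by
      have := congrArg (List.take d) hyx
      rw [List.take_left' hPlen, List.take_left' hv] at this
      exact this.symm
    have hv'P : v' = P := by
      have := congrArg (List.drop d) hyx
      rw [List.drop_left' hPlen, List.drop_left' hv] at this
      exact this
    rw [hu, hu', hvP, hv'P]
  · -- |x| ≥ d + 1 : u'[|y|] = x[0] = u[0] = a but u'[|y|] = b
    exfalso
    have hyld : y.length < d := by omega
    have e1 : u'[y.length]'(by omega) = x[0]'(by omega) := by
      rw [List.getElem_of_eq hyx (by omega),
        List.getElem_append_right (by omega)]
      simp
    have e2 : u[0]'(by omega) = x[0]'(by omega) := by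
      rw [List.getElem_of_eq hxy (by omega)]
      exact List.getElem_append_left (by omega)
    have h2 : u[0]'(by omega) = a := by rw [hug 0 (by omega)]; simp [hP]
    have h3 : u'[y.length]'(by omega) = b := by
      rw [hug' y.length hyld]
      exact (List.getElem_of_eq hP (by omega)).trans
        (P_getElem a b d y.length hd hyld (by omega))
    rw [h3, ← e2, h2] at e1
    exact hab e1.symm
end
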